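/- For every natural number m ≥ 1, there is no exceptional representation ρ of the quiver Q2 whose dimension vector (dim V_b, dim V_q, dim V_p, dim V_e) equals (m, m+1, m, m), (m, m, m+1, m), (m+1, m, m+1, m+1), or (m+1, m+1, m, m+1). -/

import Mathlib

/-! An exceptional representation has only scalar endomorphisms, so it suffices to produce a
nonzero endomorphism vanishing at a nonzero vertex. For `(m, m+1, m, m)` take `x ∈ ker ρ_qe`
and a nonzero functional `φ` on `V_q` killing `im ρ_bq`: then `φ ⊗ x` is an endomorphism
supported at `q`. For `(m+1, m, m+1, m+1)` a nonzero `x ∈ ker ρ_bq` generates a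
subrepresentation that misses `q`, and a functional at the last vertex of `b → p → e` where `x`
survives gives an endomorphism vanishing at `q`. The other two dimension vectors follow from the
symmetry `p ↔ q` of the quiver. -/

noncomputable section

open Module

universe u

/-- A representation of the square quiver `Q2`
(vertices b, p, q, e; arrows b→p, b→q, p→e, q→e) over the field `k`,
with finite-dimensional vector spaces at the vertices. -/
structure RepQ2 (k : Type u) [Field k] where
  Vb : Type u
  Vp : Type u
  Vq : Type u
  Ve : Type u
  [acgb : AddCommGroup Vb]
  [acgp : AddCommGroup Vp]
  [acgq : AddCommGroup Vq]
  [acge : AddCommGroup Ve]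
  [modb : Module k Vb]
  [modp : Module k Vp]
  [modq : Module k Vq]
  [mode : Module k Ve]
  [fdb : FiniteDimensional k Vb]
  [fdp : FiniteDimensional k Vp]
  [fdq : FiniteDimensional k Vq]
  [fde : FiniteDimensional k Ve]
  rbp : Vb →ₗ[k] Vp
  rbq : Vb →ₗ[k] Vq
  rpe : Vp →ₗ[k] Ve
  rqe : Vq →ₗ[k] Ve

attribute [instance] RepQ2.acgb RepQ2.acgp RepQ2.acgq RepQ2.acge
  RepQ2.modb RepQ2.modp RepQ2.modq RepQ2.mode
  RepQ2.fdb RepQ2.fdp RepQ2.fdq RepQ2.fde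

namespace RepQ2

variable {k : Type u} [Field k]

/-- The space of morphisms of representations `ρ → ρ'`:
quadruples of linear maps commuting with the structure maps. -/
def homSpace (ρ ρ' : RepQ2 k) :
    Submodule k ((ρ.Vb →ₗ[k] ρ'.Vb) × (ρ.Vp →ₗ[k] ρ'.Vp) ×
      (ρ.Vq →ₗ[k] ρ'.Vq) × (ρ.Ve →ₗ[k] ρ'.Ve)) where
  carrier := { f | f.2.1 ∘ₗ ρ.rbp = ρ'.rbp ∘ₗ f.1 ∧
                   f.2.2.1 ∘ₗ ρ.rbq = ρ'.rbq ∘ₗ f.1 ∧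
                   f.2.2.2 ∘ₗ ρ.rpe = ρ'.rpe ∘ₗ f.2.1 ∧
                   f.2.2.2 ∘ₗ ρ.rqe = ρ'.rqe ∘ₗ f.2.2.1 }
  add_mem' := by
    rintro f g ⟨h1, h2, h3, h4⟩ ⟨h1', h2', h3', h4'⟩
    refine ⟨?_, ?_, ?_, ?_⟩ <;>
      simp only [Prod.fst_add, Prod.snd_add, LinearMap.add_comp, LinearMap.comp_add,
        h1, h2, h3, h4, h1', h2', h3', h4']
  zero_mem' := by
    refine ⟨?_, ?_, ?_, ?_⟩ <;> simp
  smul_mem' := by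
    rintro c f ⟨h1, h2, h3, h4⟩
    refine ⟨?_, ?_, ?_, ?_⟩ <;>
      simp only [Prod.smul_fst, Prod.smul_snd, LinearMap.smul_comp, LinearMap.comp_smul,
        h1, h2, h3, h4]

/-- `hom ρ ρ'` is the `k`-dimension of the space of morphisms of representations `ρ → ρ'`. -/
def hom (ρ ρ' : RepQ2 k) : ℕ := finrank k (homSpace ρ ρ')

/-- The linear map `Φ` whose cokernel computes `Ext¹(ρ, ρ')`. -/
def phi (ρ ρ' : RepQ2 k) :
    ((ρ.Vb →ₗ[k] ρ'.Vb) × (ρ.Vp →ₗ[k] ρ'.Vp) ×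
      (ρ.Vq →ₗ[k] ρ'.Vq) × (ρ.Ve →ₗ[k] ρ'.Ve)) →ₗ[k]
    ((ρ.Vb →ₗ[k] ρ'.Vp) × (ρ.Vb →ₗ[k] ρ'.Vq) ×
      (ρ.Vp →ₗ[k] ρ'.Ve) × (ρ.Vq →ₗ[k] ρ'.Ve)) where
  toFun g := (g.2.1 ∘ₗ ρ.rbp - ρ'.rbp ∘ₗ g.1,
              g.2.2.1 ∘ₗ ρ.rbq - ρ'.rbq ∘ₗ g.1,
              g.2.2.2 ∘ₗ ρ.rpe - ρ'.rpe ∘ₗ g.2.1,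
              g.2.2.2 ∘ₗ ρ.rqe - ρ'.rqe ∘ₗ g.2.2.1)
  map_add' g h := by
    refine Prod.ext ?_ (Prod.ext ?_ (Prod.ext ?_ ?_)) <;>
      · simp only [Prod.fst_add, Prod.snd_add, LinearMap.add_comp, LinearMap.comp_add]
        abel
  map_smul' c g := by
    refine Prod.ext ?_ (Prod.ext ?_ (Prod.ext ?_ ?_)) <;>
      simp [LinearMap.smul_comp, LinearMap.comp_smul, smul_sub]

/-- `ext1 ρ ρ'` is the `k`-dimension of the cokernel of `Φ`; it equals
`dim Ext¹(ρ, ρ')` in the abelian category of representations of `Q2`. -/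
def ext1 (ρ ρ' : RepQ2 k) : ℕ :=
  finrank k (((ρ.Vb →ₗ[k] ρ'.Vp) × (ρ.Vb →ₗ[k] ρ'.Vq) ×
      (ρ.Vp →ₗ[k] ρ'.Ve) × (ρ.Vq →ₗ[k] ρ'.Ve)) ⧸ LinearMap.range (phi ρ ρ'))

/-- A representation is exceptional if `hom ρ ρ = 1` and `ext1 ρ ρ = 0`. -/
def IsExceptional (ρ : RepQ2 k) : Prop := hom ρ ρ = 1 ∧ ext1 ρ ρ = 0

/-- Isomorphism of representations of `Q2`. -/
def Iso (ρ ρ' : RepQ2 k) : Prop :=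
  ∃ (eb : ρ.Vb ≃ₗ[k] ρ'.Vb) (ep : ρ.Vp ≃ₗ[k] ρ'.Vp)
    (eq' : ρ.Vq ≃ₗ[k] ρ'.Vq) (ee : ρ.Ve ≃ₗ[k] ρ'.Ve),
    ep.toLinearMap ∘ₗ ρ.rbp = ρ'.rbp ∘ₗ eb.toLinearMap ∧
    eq'.toLinearMap ∘ₗ ρ.rbq = ρ'.rbq ∘ₗ eb.toLinearMap ∧
    ee.toLinearMap ∘ₗ ρ.rpe = ρ'.rpe ∘ₗ ep.toLinearMap ∧
    ee.toLinearMap ∘ₗ ρ.rqe = ρ'.rqe ∘ₗ eq'.toLinearMap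

end RepQ2

variable (k : Type u) [Field k]

/-- `π₊^m : k^{m+1} → k^m`, `(a₁,…,a_{m+1}) ↦ (a₁,…,a_m)`. -/
def piPlus (m : ℕ) : (Fin (m + 1) → k) →ₗ[k] (Fin m → k) :=
  LinearMap.funLeft k k Fin.castSucc

/-- `π₋^m : k^{m+1} → k^m`, `(a₁,…,a_{m+1}) ↦ (a₂,…,a_{m+1})`. -/
def piMinus (m : ℕ) : (Fin (m + 1) → k) →ₗ[k] (Fin m → k) :=
  LinearMap.funLeft k k Fin.succ

/-- `j₊^m : k^m → k^{m+1}`, `(a₁,…,a_m) ↦ (a₁,…,a_m,0)`. -/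
def jPlus (m : ℕ) : (Fin m → k) →ₗ[k] (Fin (m + 1) → k) where
  toFun a := Fin.snoc a 0
  map_add' a b := by
    ext i
    induction i using Fin.lastCases <;> simp
  map_smul' c a := by
    ext i
    induction i using Fin.lastCases <;> simp

/-- `j₋^m : k^m → k^{m+1}`, `(a₁,…,a_m) ↦ (0,a₁,…,a_m)`. -/
def jMinus (m : ℕ) : (Fin m → k) →ₗ[k] (Fin (m + 1) → k) where
  toFun a := Fin.cons 0 a
  map_add' a b := by
    ext i
    induction i using Fin.cases <;> simp
  map_smul' c a := by
    ext i
    induction i using Fin.cases <;> simp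

/-- `E₁^m = (k^{m+1}, k^m, k^m, k^m)` with `ρ_bp = π₊^m`, `ρ_bq = π₋^m`, `ρ_pe = id`, `ρ_qe = id`. -/
def E1 (m : ℕ) : RepQ2 k where
  Vb := Fin (m + 1) → k
  Vp := Fin m → k
  Vq := Fin m → k
  Ve := Fin m → k
  rbp := piPlus k m
  rbq := piMinus k m
  rpe := LinearMap.id
  rqe := LinearMap.id

/-- `E₂^m = (k^m, k^{m+1}, k^{m+1}, k^{m+1})` with `ρ_bp = j₊^m`, `ρ_bq = j₋^m`, `ρ_pe = id`, `ρ_qe = id`. -/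
def E2 (m : ℕ) : RepQ2 k where
  Vb := Fin m → k
  Vp := Fin (m + 1) → k
  Vq := Fin (m + 1) → k
  Ve := Fin (m + 1) → k
  rbp := jPlus k m
  rbq := jMinus k m
  rpe := LinearMap.id
  rqe := LinearMap.id

/-- `E₃^m = (k^m, k^m, k^m, k^{m+1})` with `ρ_bp = id`, `ρ_bq = id`, `ρ_pe = j₊^m`, `ρ_qe = j₋^m`. -/
def E3 (m : ℕ) : RepQ2 k where
  Vb := Fin m → k
  Vp := Fin m → k
  Vq := Fin m → k
  Ve := Fin (m + 1) → k
  rbp := LinearMap.id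
  rbq := LinearMap.id
  rpe := jPlus k m
  rqe := jMinus k m

/-- `E₄^m = (k^{m+1}, k^{m+1}, k^{m+1}, k^m)` with `ρ_bp = id`, `ρ_bq = id`, `ρ_pe = π₊^m`, `ρ_qe = π₋^m`. -/
def E4 (m : ℕ) : RepQ2 k where
  Vb := Fin (m + 1) → k
  Vp := Fin (m + 1) → k
  Vq := Fin (m + 1) → k
  Ve := Fin m → k
  rbp := LinearMap.id
  rbq := LinearMap.id
  rpe := piPlus k m
  rqe := piMinus k m

/-- `E₅^m = (k^m, k^m, k^{m+1}, k^{m+1})` with `ρ_bp = id`, `ρ_bq = j₋^m`, `ρ_pe = j₊^m`, `ρ_qe = id`. -/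
def E5 (m : ℕ) : RepQ2 k where
  Vb := Fin m → k
  Vp := Fin m → k
  Vq := Fin (m + 1) → k
  Ve := Fin (m + 1) → k
  rbp := LinearMap.id
  rbq := jMinus k m
  rpe := jPlus k m
  rqe := LinearMap.id

/-- `E₆^m = (k^{m+1}, k^{m+1}, k^m, k^m)` with `ρ_bp = id`, `ρ_bq = π₋^m`, `ρ_pe = π₊^m`, `ρ_qe = id`. -/
def E6 (m : ℕ) : RepQ2 k where
  Vb := Fin (m + 1) → k
  Vp := Fin (m + 1) → k
  Vq := Fin m → k
  Ve := Fin m → k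
  rbp := LinearMap.id
  rbq := piMinus k m
  rpe := piPlus k m
  rqe := LinearMap.id

/-- `E₇^m = (k^{m+1}, k^m, k^{m+1}, k^m)` with `ρ_bp = π₊^m`, `ρ_bq = id`, `ρ_pe = id`, `ρ_qe = π₋^m`. -/
def E7 (m : ℕ) : RepQ2 k where
  Vb := Fin (m + 1) → k
  Vp := Fin m → k
  Vq := Fin (m + 1) → k
  Ve := Fin m → k
  rbp := piPlus k m
  rbq := LinearMap.id
  rpe := LinearMap.id
  rqe := piMinus k m

/-- `E₈^m = (k^m, k^{m+1}, k^m, k^{m+1})` with `ρ_bp = j₊^m`, `ρ_bq = id`, `ρ_pe = id`, `ρ_qe = j₋^m`. -/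
def E8 (m : ℕ) : RepQ2 k where
  Vb := Fin m → k
  Vp := Fin (m + 1) → k
  Vq := Fin m → k
  Ve := Fin (m + 1) → k
  rbp := jPlus k m
  rbq := LinearMap.id
  rpe := LinearMap.id
  rqe := jMinus k m

/-- `F₊ = (0, k, 0, 0)` with zero structure maps. -/
def Fplus : RepQ2 k where
  Vb := Fin 0 → k
  Vp := Fin 1 → k
  Vq := Fin 0 → k
  Ve := Fin 0 → k
  rbp := 0
  rbq := 0
  rpe := 0
  rqe := 0

/-- `F₋ = (0, 0, k, 0)` with zero structure maps. -/
def Fminus : RepQ2 k where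
  Vb := Fin 0 → k
  Vp := Fin 0 → k
  Vq := Fin 1 → k
  Ve := Fin 0 → k
  rbp := 0
  rbq := 0
  rpe := 0
  rqe := 0

/-- `G₊ = (k, k, 0, k)` with `ρ_bp = id`, `ρ_pe = id` and the other structure maps zero. -/
def Gplus : RepQ2 k where
  Vb := Fin 1 → k
  Vp := Fin 1 → k
  Vq := Fin 0 → k
  Ve := Fin 1 → k
  rbp := LinearMap.id
  rbq := 0
  rpe := LinearMap.id
  rqe := 0

/-- `G₋ = (k, 0, k, k)` with `ρ_bq = id`, `ρ_qe = id` and the other structure maps zero. -/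
def Gminus : RepQ2 k where
  Vb := Fin 1 → k
  Vp := Fin 0 → k
  Vq := Fin 1 → k
  Ve := Fin 1 → k
  rbp := 0
  rbq := LinearMap.id
  rpe := 0
  rqe := LinearMap.id

namespace LinearMap

variable {k V W : Type*} [Field k] [AddCommGroup V] [Module k V] [AddCommGroup W] [Module k W]

theorem exists_ne_zero_apply_eq_zero_of_finrank_lt [FiniteDimensional k V]
    [FiniteDimensional k W] (f : V →ₗ[k] W) (h : finrank k W < finrank k V) :
    ∃ x, x ≠ 0 ∧ f x = 0 := by
  obtain ⟨x, hx, hx0⟩ := (Submodule.ne_bot_iff _).1 (ker_ne_bot_of_finrank_lt (f := f) h)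
  exact ⟨x, hx0, hx⟩

theorem exists_dual_ne_zero_comp_eq_zero_of_finrank_lt [FiniteDimensional k V] (f : V →ₗ[k] W)
    (h : finrank k V < finrank k W) : ∃ φ : Dual k W, φ ≠ 0 ∧ φ ∘ₗ f = 0 := by
  obtain ⟨φ, hφ, hφf⟩ := Submodule.exists_dual_map_eq_bot_of_lt_top
    (Submodule.lt_top_of_finrank_lt_finrank ((finrank_range_le f).trans_lt h)) inferInstance
  exact ⟨φ, hφ, range_eq_bot.1 (by rwa [range_comp])⟩

theorem eq_zero_of_forall_smulRight_eq_zero {x : V} (h : ∀ φ : Dual k V, φ.smulRight x = 0) :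
    x = 0 := by
  by_contra hx
  obtain ⟨φ, hφ⟩ := Projective.exists_dual_ne_zero k hx
  have hφ0 : φ = 0 := (smulRight_apply_eq_zero_iff.1 (h φ)).resolve_right hx
  simp [hφ0] at hφ

end LinearMap

namespace RepQ2

variable {k : Type u} [Field k]

abbrev VertexEnd (ρ : RepQ2 k) : Type u :=
  (ρ.Vb →ₗ[k] ρ.Vb) × (ρ.Vp →ₗ[k] ρ.Vp) × (ρ.Vq →ₗ[k] ρ.Vq) × (ρ.Ve →ₗ[k] ρ.Ve)

def idEnd (ρ : RepQ2 k) : ρ.VertexEnd := (LinearMap.id, LinearMap.id, LinearMap.id, LinearMap.id)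

theorem idEnd_mem_homSpace (ρ : RepQ2 k) : ρ.idEnd ∈ ρ.homSpace ρ := by
  refine ⟨?_, ?_, ?_, ?_⟩ <;> rfl

theorem eq_zero_of_hom_self_eq_one {ρ : RepQ2 k} (h : ρ.hom ρ = 1) {f : ρ.VertexEnd}
    (hf : f ∈ ρ.homSpace ρ) {M : Type*} [AddCommGroup M] [Module k M]
    (π : ρ.VertexEnd →ₗ[k] M) (hπ : π ρ.idEnd ≠ 0) (hπf : π f = 0) : f = 0 := by
  obtain ⟨v, -, hv⟩ := finrank_eq_one_iff'.1 h
  obtain ⟨a, ha⟩ := hv ⟨_, ρ.idEnd_mem_homSpace⟩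
  obtain ⟨b, hb⟩ := hv ⟨f, hf⟩
  have ha : a • (v : ρ.VertexEnd) = ρ.idEnd := congrArg Subtype.val ha
  have hb : b • (v : ρ.VertexEnd) = f := congrArg Subtype.val hb
  have hπv : π v ≠ 0 := fun h0 ↦ hπ (by rw [← ha, map_smul, h0, smul_zero])
  have hb0 : b = 0 := by
    have : b • π v = 0 := by rw [← map_smul, hb, hπf]
    exact (smul_eq_zero.1 this).resolve_right hπv
  rw [← hb, hb0, zero_smul]

def swap (ρ : RepQ2 k) : RepQ2 k where
  Vb := ρ.Vb
  Vp := ρ.Vq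
  Vq := ρ.Vp
  Ve := ρ.Ve
  rbp := ρ.rbq
  rbq := ρ.rbp
  rpe := ρ.rqe
  rqe := ρ.rpe

def swapVertexEnd (ρ : RepQ2 k) : ρ.VertexEnd ≃ₗ[k] ρ.swap.VertexEnd where
  toFun f := (f.1, f.2.2.1, f.2.1, f.2.2.2)
  invFun f := (f.1, f.2.2.1, f.2.1, f.2.2.2)
  map_add' _ _ := rfl
  map_smul' _ _ := rfl
  left_inv _ := rfl
  right_inv _ := rfl

theorem map_swapVertexEnd_homSpace (ρ : RepQ2 k) :
    (ρ.homSpace ρ).map ρ.swapVertexEnd.toLinearMap = ρ.swap.homSpace ρ.swap := by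
  ext f
  rw [Submodule.mem_map_equiv]
  change (_ ∧ _ ∧ _ ∧ _) ↔ (_ ∧ _ ∧ _ ∧ _)
  tauto

theorem hom_swap_self (ρ : RepQ2 k) : ρ.swap.hom ρ.swap = ρ.hom ρ := by
  rw [hom, hom, ← map_swapVertexEnd_homSpace, LinearEquiv.finrank_map_eq]

theorem hom_self_ne_one_of_lt_finrank_Vq (ρ : RepQ2 k) (hb : 0 < finrank k ρ.Vb)
    (hbq : finrank k ρ.Vb < finrank k ρ.Vq) (hqe : finrank k ρ.Ve < finrank k ρ.Vq) :
    ρ.hom ρ ≠ 1 := by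
  intro h
  obtain ⟨x, hx, hxe⟩ := ρ.rqe.exists_ne_zero_apply_eq_zero_of_finrank_lt hqe
  obtain ⟨φ, hφ, hφb⟩ := ρ.rbq.exists_dual_ne_zero_comp_eq_zero_of_finrank_lt hbq
  have hφb' (v) : φ (ρ.rbq v) = 0 := LinearMap.congr_fun hφb v
  have hf : ((0, 0, φ.smulRight x, 0) : ρ.VertexEnd) ∈ ρ.homSpace ρ := by
    refine ⟨?_, ?_, ?_, ?_⟩ <;> ext v
    all_goals simp [hxe, hφb']
  have : Nontrivial ρ.Vb := finrank_pos_iff.1 hb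
  have hφx : φ.smulRight x = 0 :=
    congrArg (·.2.2.1) (eq_zero_of_hom_self_eq_one h hf (LinearMap.fst k _ _) one_ne_zero rfl)
  exact (LinearMap.smulRight_apply_eq_zero_iff.1 hφx).elim hφ hx

/-- The subrepresentation generated by `x ∈ ker ρ_bq` avoids `q`; follow `x` along `b → p → e`
and pair its last nonzero image with a functional to get an endomorphism vanishing at `q`. -/
theorem eq_zero_of_rbq_eq_zero {ρ : RepQ2 k}
    (H : ∀ f ∈ ρ.homSpace ρ, f.2.2.1 = 0 → f = 0) {φ : Dual k ρ.Ve} (hφ : φ ≠ 0)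
    (hφq : φ ∘ₗ ρ.rqe = 0) {x : ρ.Vb} (hx : ρ.rbq x = 0) : x = 0 := by
  have hφq' (v) : φ (ρ.rqe v) = 0 := LinearMap.congr_fun hφq v
  have hpe : ρ.rpe (ρ.rbp x) = 0 := by
    have hf : (((φ ∘ₗ ρ.rpe ∘ₗ ρ.rbp).smulRight x, (φ ∘ₗ ρ.rpe).smulRight (ρ.rbp x), 0,
        φ.smulRight (ρ.rpe (ρ.rbp x))) : ρ.VertexEnd) ∈ ρ.homSpace ρ := by
      refine ⟨?_, ?_, ?_, ?_⟩ <;> ext v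
      all_goals simp [hx, hφq']
    have hφy : φ.smulRight (ρ.rpe (ρ.rbp x)) = 0 := congrArg (·.2.2.2) (H _ hf rfl)
    exact (LinearMap.smulRight_apply_eq_zero_iff.1 hφy).resolve_left hφ
  have hp : ρ.rbp x = 0 := by
    refine LinearMap.eq_zero_of_forall_smulRight_eq_zero (k := k) fun ψ ↦ ?_
    have hf : (((ψ ∘ₗ ρ.rbp).smulRight x, ψ.smulRight (ρ.rbp x), 0, 0) : ρ.VertexEnd) ∈
        ρ.homSpace ρ := by
      refine ⟨?_, ?_, ?_, ?_⟩ <;> ext v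
      all_goals simp [hx, hpe]
    exact congrArg (·.2.1) (H _ hf rfl)
  refine LinearMap.eq_zero_of_forall_smulRight_eq_zero (k := k) fun ψ ↦ ?_
  have hf : ((ψ.smulRight x, 0, 0, 0) : ρ.VertexEnd) ∈ ρ.homSpace ρ := by
    refine ⟨?_, ?_, ?_, ?_⟩ <;> ext v
    all_goals simp [hx, hp]
  exact congrArg (·.1) (H _ hf rfl)

theorem hom_self_ne_one_of_finrank_Vq_lt (ρ : RepQ2 k) (hq : 0 < finrank k ρ.Vq)
    (hqb : finrank k ρ.Vq < finrank k ρ.Vb) (hqe : finrank k ρ.Vq < finrank k ρ.Ve) :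
    ρ.hom ρ ≠ 1 := by
  intro h
  have : Nontrivial ρ.Vq := finrank_pos_iff.1 hq
  have H (f) (hf : f ∈ ρ.homSpace ρ) (hfq : f.2.2.1 = 0) : f = 0 :=
    eq_zero_of_hom_self_eq_one h hf
      (LinearMap.fst k _ _ ∘ₗ LinearMap.snd k _ _ ∘ₗ LinearMap.snd k _ _) one_ne_zero hfq
  obtain ⟨x, hx, hxq⟩ := ρ.rbq.exists_ne_zero_apply_eq_zero_of_finrank_lt hqb
  obtain ⟨φ, hφ, hφq⟩ := ρ.rqe.exists_dual_ne_zero_comp_eq_zero_of_finrank_lt hqe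
  exact hx (eq_zero_of_rbq_eq_zero H hφ hφq hxq)

theorem hom_self_ne_one_of_lt_finrank_Vp (ρ : RepQ2 k) (hb : 0 < finrank k ρ.Vb)
    (hbp : finrank k ρ.Vb < finrank k ρ.Vp) (hep : finrank k ρ.Ve < finrank k ρ.Vp) :
    ρ.hom ρ ≠ 1 := by
  rw [← hom_swap_self]
  exact ρ.swap.hom_self_ne_one_of_lt_finrank_Vq hb hbp hep

theorem hom_self_ne_one_of_finrank_Vp_lt (ρ : RepQ2 k) (hp : 0 < finrank k ρ.Vp)
    (hpb : finrank k ρ.Vp < finrank k ρ.Vb) (hpe : finrank k ρ.Vp < finrank k ρ.Ve) :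
    ρ.hom ρ ≠ 1 := by
  rw [← hom_swap_self]
  exact ρ.swap.hom_self_ne_one_of_finrank_Vq_lt hp hpb hpe

end RepQ2

theorem statement_16_general (k : Type u) [Field k] (m : ℕ) (hm : 1 ≤ m)
    (ρ : RepQ2 k) (hρ : ρ.IsExceptional) :
    ¬((finrank k ρ.Vb = m ∧ finrank k ρ.Vq = m + 1 ∧ finrank k ρ.Vp = m ∧
        finrank k ρ.Ve = m) ∨
      (finrank k ρ.Vb = m ∧ finrank k ρ.Vq = m ∧ finrank k ρ.Vp = m + 1 ∧
        finrank k ρ.Ve = m) ∨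
      (finrank k ρ.Vb = m + 1 ∧ finrank k ρ.Vq = m ∧ finrank k ρ.Vp = m + 1 ∧
        finrank k ρ.Ve = m + 1) ∨
      (finrank k ρ.Vb = m + 1 ∧ finrank k ρ.Vq = m + 1 ∧ finrank k ρ.Vp = m ∧
        finrank k ρ.Ve = m + 1)) := by
  rintro (⟨hb, hq, hp, he⟩ | ⟨hb, hq, hp, he⟩ | ⟨hb, hq, hp, he⟩ | ⟨hb, hq, hp, he⟩)
  · exact ρ.hom_self_ne_one_of_lt_finrank_Vq (by omega) (by omega) (by omega) hρ.1
  · exact ρ.hom_self_ne_one_of_lt_finrank_Vp (by omega) (by omega) (by omega) hρ.1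
  · exact ρ.hom_self_ne_one_of_finrank_Vq_lt (by omega) (by omega) (by omega) hρ.1
  · exact ρ.hom_self_ne_one_of_finrank_Vp_lt (by omega) (by omega) (by omega) hρ.1

/-- For `m ≥ 1`, no exceptional representation of `Q2` has dimension vector
`(α_b, α₋, α₊, α_e) = (dim V_b, dim V_q, dim V_p, dim V_e)` equal to
`(m, m+1, m, m)`, `(m, m, m+1, m)`, `(m+1, m, m+1, m+1)` or `(m+1, m+1, m, m+1)`. -/
theorem statement_16 (k : Type u) [Field k] [IsAlgClosed k] (m : ℕ) (hm : 1 ≤ m)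
    (ρ : RepQ2 k) (hρ : ρ.IsExceptional) :
    ¬((finrank k ρ.Vb = m ∧ finrank k ρ.Vq = m + 1 ∧ finrank k ρ.Vp = m ∧
        finrank k ρ.Ve = m) ∨
      (finrank k ρ.Vb = m ∧ finrank k ρ.Vq = m ∧ finrank k ρ.Vp = m + 1 ∧
        finrank k ρ.Ve = m) ∨
      (finrank k ρ.Vb = m + 1 ∧ finrank k ρ.Vq = m ∧ finrank k ρ.Vp = m + 1 ∧
        finrank k ρ.Ve = m + 1) ∨
      (finrank k ρ.Vb = m + 1 ∧ finrank k ρ.Vq = m + 1 ∧ finrank k ρ.Vp = m ∧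
        finrank k ρ.Ve = m + 1)) :=
  statement_16_general k m hm ρ hρ
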